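/- Harnack inequality consequence for almost-harmonic functions on a cylinder segment: if v > 0 is smooth on S¹ × [a, b] with Δ(log v) bounded by ε, v ≥ c > 0, and inf over every unit-length subcylinder of v is at most C₁, then v ≤ C₂ on S¹ × [a + 1, b − 1], where C₂ depends only on c, C₁, ε, and not on b − a. -/

import Mathlib

open Real MeasureTheory intervalIntegral Set

noncomputable def lap2 (u : ℝ × ℝ → ℝ) (p : ℝ × ℝ) : ℝ :=
  fderiv ℝ (fun q => fderiv ℝ u q ((1 : ℝ), (0 : ℝ))) p ((1 : ℝ), (0 : ℝ)) +
    fderiv ℝ (fun q => fderiv ℝ u q ((0 : ℝ), (1 : ℝ))) p ((0 : ℝ), (1 : ℝ))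

noncomputable def d1 (u : ℝ × ℝ → ℝ) (q : ℝ × ℝ) : ℝ := fderiv ℝ u q ((1:ℝ), (0:ℝ))
noncomputable def d2 (u : ℝ × ℝ → ℝ) (q : ℝ × ℝ) : ℝ := fderiv ℝ u q ((0:ℝ), (1:ℝ))

noncomputable def pt (x₀ : ℝ × ℝ) (t θ : ℝ) : ℝ × ℝ :=
  (x₀.1 + t * Real.cos θ, x₀.2 + t * Real.sin θ)

lemma lap2_eq (u : ℝ × ℝ → ℝ) (p : ℝ × ℝ) :
    lap2 u p = d1 (d1 u) p + d2 (d2 u) p := rfl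

lemma clm_apply_pair (L : ℝ × ℝ →L[ℝ] ℝ) (x y : ℝ) :
    L (x, y) = x * L (1, 0) + y * L (0, 1) := by
  have h : ((x, y) : ℝ × ℝ) = x • ((1:ℝ), (0:ℝ)) + y • ((0:ℝ), (1:ℝ)) := by
    simp [Prod.ext_iff]
  rw [h, map_add, L.map_smul, L.map_smul, smul_eq_mul, smul_eq_mul]

lemma contDiff_d1 {u : ℝ × ℝ → ℝ} (hu : ContDiff ℝ (⊤ : ℕ∞) u) : ContDiff ℝ (⊤ : ℕ∞) (d1 u) :=
  (hu.fderiv_right (by simp)).clm_apply contDiff_const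

lemma contDiff_d2 {u : ℝ × ℝ → ℝ} (hu : ContDiff ℝ (⊤ : ℕ∞) u) : ContDiff ℝ (⊤ : ℕ∞) (d2 u) :=
  (hu.fderiv_right (by simp)).clm_apply contDiff_const

lemma hasDerivAt_pt_radial (x₀ : ℝ × ℝ) (θ t : ℝ) :
    HasDerivAt (fun s : ℝ => pt x₀ s θ) (Real.cos θ, Real.sin θ) t := by
  have := (((hasDerivAt_id t).mul_const (Real.cos θ)).const_add x₀.1).prodMk
      (((hasDerivAt_id t).mul_const (Real.sin θ)).const_add x₀.2)
  simpa [pt] using this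

lemma hasDerivAt_pt_angular (x₀ : ℝ × ℝ) (t θ : ℝ) :
    HasDerivAt (fun ψ : ℝ => pt x₀ t ψ) (t * (-Real.sin θ), t * Real.cos θ) θ := by
  have := (((Real.hasDerivAt_cos θ).const_mul t).const_add x₀.1).prodMk
      (((Real.hasDerivAt_sin θ).const_mul t).const_add x₀.2)
  simpa [pt] using this

/-- radial derivative of `w ∘ pt` -/
lemma hasDerivAt_radial {w : ℝ × ℝ → ℝ} (hw : ContDiff ℝ (⊤ : ℕ∞) w) (x₀ : ℝ × ℝ) (θ t : ℝ) :
    HasDerivAt (fun s => w (pt x₀ s θ))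
      (Real.cos θ * d1 w (pt x₀ t θ) + Real.sin θ * d2 w (pt x₀ t θ)) t := by
  have hF := (hw.differentiable (by simp) (pt x₀ t θ)).hasFDerivAt
  have h2 := hF.comp_hasDerivAt t (hasDerivAt_pt_radial x₀ θ t)
  rw [clm_apply_pair] at h2
  exact h2

/-- angular derivative of `w ∘ pt` -/
lemma hasDerivAt_angular {w : ℝ × ℝ → ℝ} (hw : ContDiff ℝ (⊤ : ℕ∞) w) (x₀ : ℝ × ℝ) (t θ : ℝ) :
    HasDerivAt (fun ψ => w (pt x₀ t ψ))
      ((t * (-Real.sin θ)) * d1 w (pt x₀ t θ) + (t * Real.cos θ) * d2 w (pt x₀ t θ)) θ := by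
  have hF := (hw.differentiable (by simp) (pt x₀ t θ)).hasFDerivAt
  have h2 := hF.comp_hasDerivAt θ (hasDerivAt_pt_angular x₀ t θ)
  rw [clm_apply_pair] at h2
  exact h2

noncomputable def Dfn (u : ℝ × ℝ → ℝ) (x₀ : ℝ × ℝ) (t θ : ℝ) : ℝ :=
  Real.cos θ * d1 u (pt x₀ t θ) + Real.sin θ * d2 u (pt x₀ t θ)
noncomputable def Wfn (u : ℝ × ℝ → ℝ) (x₀ : ℝ × ℝ) (t θ : ℝ) : ℝ :=
  -Real.sin θ * d1 u (pt x₀ t θ) + Real.cos θ * d2 u (pt x₀ t θ)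
/-- derivative of `t ↦ t * Dfn u x₀ t θ` -/
noncomputable def Gfn (u : ℝ × ℝ → ℝ) (x₀ : ℝ × ℝ) (t θ : ℝ) : ℝ :=
  Dfn u x₀ t θ + t *
    (Real.cos θ * (Real.cos θ * d1 (d1 u) (pt x₀ t θ) + Real.sin θ * d2 (d1 u) (pt x₀ t θ)) +
     Real.sin θ * (Real.cos θ * d1 (d2 u) (pt x₀ t θ) + Real.sin θ * d2 (d2 u) (pt x₀ t θ)))
/-- derivative of `ψ ↦ Wfn u x₀ t ψ` at `θ` -/
noncomputable def Wder (u : ℝ × ℝ → ℝ) (x₀ : ℝ × ℝ) (t θ : ℝ) : ℝ :=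
  (-Real.cos θ * d1 u (pt x₀ t θ) +
    (-Real.sin θ) * ((t * (-Real.sin θ)) * d1 (d1 u) (pt x₀ t θ) +
      (t * Real.cos θ) * d2 (d1 u) (pt x₀ t θ))) +
  (-Real.sin θ * d2 u (pt x₀ t θ) +
    Real.cos θ * ((t * (-Real.sin θ)) * d1 (d2 u) (pt x₀ t θ) +
      (t * Real.cos θ) * d2 (d2 u) (pt x₀ t θ)))

lemma hasDerivAt_tD {u : ℝ × ℝ → ℝ} (hu : ContDiff ℝ (⊤ : ℕ∞) u) (x₀ : ℝ × ℝ) (θ t : ℝ) :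
    HasDerivAt (fun s => s * Dfn u x₀ s θ) (Gfn u x₀ t θ) t := by
  have hD : HasDerivAt (fun s => Dfn u x₀ s θ)
      (Real.cos θ * (Real.cos θ * d1 (d1 u) (pt x₀ t θ) + Real.sin θ * d2 (d1 u) (pt x₀ t θ)) +
       Real.sin θ * (Real.cos θ * d1 (d2 u) (pt x₀ t θ) + Real.sin θ * d2 (d2 u) (pt x₀ t θ))) t :=
    ((hasDerivAt_radial (contDiff_d1 hu) x₀ θ t).const_mul (Real.cos θ)).add
      ((hasDerivAt_radial (contDiff_d2 hu) x₀ θ t).const_mul (Real.sin θ))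
  have := (hasDerivAt_id t).mul hD
  refine HasDerivAt.congr_deriv this ?_
  unfold Gfn
  simp only [id_eq]
  ring

lemma hasDerivAt_W {u : ℝ × ℝ → ℝ} (hu : ContDiff ℝ (⊤ : ℕ∞) u) (x₀ : ℝ × ℝ) (t θ : ℝ) :
    HasDerivAt (fun ψ => Wfn u x₀ t ψ) (Wder u x₀ t θ) θ := by
  have h1 : HasDerivAt (fun ψ => -Real.sin ψ * d1 u (pt x₀ t ψ))
      (-Real.cos θ * d1 u (pt x₀ t θ) +
        (-Real.sin θ) * ((t * (-Real.sin θ)) * d1 (d1 u) (pt x₀ t θ) +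
          (t * Real.cos θ) * d2 (d1 u) (pt x₀ t θ))) θ :=
    ((Real.hasDerivAt_sin θ).neg).mul (hasDerivAt_angular (contDiff_d1 hu) x₀ t θ)
  have h2 : HasDerivAt (fun ψ => Real.cos ψ * d2 u (pt x₀ t ψ))
      (-Real.sin θ * d2 u (pt x₀ t θ) +
        Real.cos θ * ((t * (-Real.sin θ)) * d1 (d2 u) (pt x₀ t θ) +
          (t * Real.cos θ) * d2 (d2 u) (pt x₀ t θ))) θ :=
    (Real.hasDerivAt_cos θ).mul (hasDerivAt_angular (contDiff_d2 hu) x₀ t θ)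
  exact h1.add h2

/-- the key pointwise identity -/
lemma key_identity (u : ℝ × ℝ → ℝ) (x₀ : ℝ × ℝ) (t θ : ℝ) :
    Gfn u x₀ t θ = t * lap2 u (pt x₀ t θ) - Wder u x₀ t θ := by
  have hcs := Real.sin_sq_add_cos_sq θ
  unfold Gfn Wder Dfn
  rw [lap2_eq]
  linear_combination (t * (d1 (d1 u) (pt x₀ t θ) + d2 (d2 u) (pt x₀ t θ))) * hcs

-- continuity lemmas
lemma cont_pt (x₀ : ℝ × ℝ) : Continuous (fun z : ℝ × ℝ => pt x₀ z.1 z.2) := by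
  unfold pt; fun_prop

lemma cont_lap2 {u : ℝ × ℝ → ℝ} (hu : ContDiff ℝ (⊤ : ℕ∞) u) : Continuous (lap2 u) := by
  have h : lap2 u = fun p => d1 (d1 u) p + d2 (d2 u) p := funext fun p => lap2_eq u p
  rw [h]
  exact ((contDiff_d1 (contDiff_d1 hu)).continuous).add
    ((contDiff_d2 (contDiff_d2 hu)).continuous)

lemma cont_D {u : ℝ × ℝ → ℝ} (hu : ContDiff ℝ (⊤ : ℕ∞) u) (x₀ : ℝ × ℝ) :
    Continuous (fun z : ℝ × ℝ => Dfn u x₀ z.1 z.2) := by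
  have h1 := (contDiff_d1 hu).continuous
  have h2 := (contDiff_d2 hu).continuous
  have hp := cont_pt x₀
  unfold Dfn
  fun_prop

lemma cont_G {u : ℝ × ℝ → ℝ} (hu : ContDiff ℝ (⊤ : ℕ∞) u) (x₀ : ℝ × ℝ) :
    Continuous (fun z : ℝ × ℝ => Gfn u x₀ z.1 z.2) := by
  have h1 := (contDiff_d1 hu).continuous
  have h2 := (contDiff_d2 hu).continuous
  have h11 := (contDiff_d1 (contDiff_d1 hu)).continuous
  have h12 := (contDiff_d2 (contDiff_d1 hu)).continuous
  have h21 := (contDiff_d1 (contDiff_d2 hu)).continuous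
  have h22 := (contDiff_d2 (contDiff_d2 hu)).continuous
  have hp := cont_pt x₀
  unfold Gfn Dfn
  fun_prop

-- Fubini swap for interval integrals of continuous functions
lemma fubini_swap_cont {F : ℝ → ℝ → ℝ} (hF : Continuous fun z : ℝ × ℝ => F z.1 z.2)
    {x1 x2 y1 y2 : ℝ} (h1 : x1 ≤ x2) (h2 : y1 ≤ y2) :
    ∫ t in x1..x2, (∫ θ in y1..y2, F t θ) = ∫ θ in y1..y2, ∫ t in x1..x2, F t θ := by
  have hi : Integrable (Function.uncurry F)
      ((volume.restrict (Ioc x1 x2)).prod (volume.restrict (Ioc y1 y2))) := by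
    rw [Measure.prod_restrict]
    have hc : IsCompact (Icc x1 x2 ×ˢ Icc y1 y2) := isCompact_Icc.prod isCompact_Icc
    have : IntegrableOn (Function.uncurry F) (Icc x1 x2 ×ˢ Icc y1 y2)
        (volume.prod volume) := by
      rw [← Measure.volume_eq_prod]
      exact hF.continuousOn.integrableOn_compact hc
    exact this.mono_set (prod_mono Ioc_subset_Icc_self Ioc_subset_Icc_self)
  simp only [intervalIntegral.integral_of_le h1, intervalIntegral.integral_of_le h2]
  exact MeasureTheory.integral_integral_swap hi

noncomputable def Eball (x₀ : ℝ × ℝ) (r : ℝ) : Set (ℝ × ℝ) :=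
  {z | (z.1 - x₀.1)^2 + (z.2 - x₀.2)^2 ≤ r^2}

lemma pt_mem_Eball {x₀ : ℝ × ℝ} {r t : ℝ} (h0 : 0 ≤ t) (htr : t ≤ r) (θ : ℝ) :
    pt x₀ t θ ∈ Eball x₀ r := by
  have hcs := Real.sin_sq_add_cos_sq θ
  simp only [Eball, pt, mem_setOf_eq]
  ring_nf
  nlinarith [sq_nonneg t, sq_nonneg r]

section core
variable {u : ℝ × ℝ → ℝ}

lemma radial_FTC (hu : ContDiff ℝ (⊤ : ℕ∞) u) (x₀ : ℝ × ℝ) (θ ρ : ℝ) :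
    ρ * Dfn u x₀ ρ θ = ∫ t in (0:ℝ)..ρ, Gfn u x₀ t θ := by
  have hint : IntervalIntegrable (fun t => Gfn u x₀ t θ) volume 0 ρ :=
    ((cont_G hu x₀).comp (continuous_id.prodMk continuous_const)).intervalIntegrable _ _
  rw [integral_eq_sub_of_hasDerivAt (fun s _ => hasDerivAt_tD hu x₀ θ s) hint]
  simp

lemma cont_Wder (hu : ContDiff ℝ (⊤ : ℕ∞) u) (x₀ : ℝ × ℝ) (t : ℝ) : Continuous (fun θ => Wder u x₀ t θ) := by
  have h : (fun θ => Wder u x₀ t θ)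
      = fun θ => t * lap2 u (pt x₀ t θ) - Gfn u x₀ t θ := by
    funext θ; have := key_identity u x₀ t θ; linarith
  rw [h]
  have hL := cont_lap2 hu
  have hG := cont_G hu x₀
  have hp := cont_pt x₀
  have hL2 : Continuous (fun θ : ℝ => lap2 u (pt x₀ t θ)) := by
    have : (fun θ : ℝ => lap2 u (pt x₀ t θ))
        = (lap2 u) ∘ ((fun z : ℝ × ℝ => pt x₀ z.1 z.2) ∘ (fun θ : ℝ => (t, θ))) := rfl
    rw [this]; exact hL.comp (hp.comp (continuous_const.prodMk continuous_id))
  have hG2 : Continuous (fun θ : ℝ => Gfn u x₀ t θ) := by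
    have : (fun θ : ℝ => Gfn u x₀ t θ)
        = (fun z : ℝ × ℝ => Gfn u x₀ z.1 z.2) ∘ (fun θ : ℝ => (t, θ)) := rfl
    rw [this]; exact hG.comp (continuous_const.prodMk continuous_id)
  exact (continuous_const.mul hL2).sub hG2

lemma angular_int (hu : ContDiff ℝ (⊤ : ℕ∞) u) (x₀ : ℝ × ℝ) (t : ℝ) :
    ∫ θ in (-π)..π, Gfn u x₀ t θ = t * ∫ θ in (-π)..π, lap2 u (pt x₀ t θ) := by
  have hWint : IntervalIntegrable (fun θ => Wder u x₀ t θ) volume (-π) π :=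
    (cont_Wder hu x₀ t).intervalIntegrable _ _
  have hW : (∫ θ in (-π)..π, Wder u x₀ t θ) = 0 := by
    rw [integral_eq_sub_of_hasDerivAt (fun ψ _ => hasDerivAt_W hu x₀ t ψ) hWint]
    simp [Wfn, pt]
  have hLc : Continuous (fun θ => lap2 u (pt x₀ t θ)) := by
    have h2 : (fun θ : ℝ => lap2 u (pt x₀ t θ))
        = (lap2 u) ∘ ((fun z : ℝ × ℝ => pt x₀ z.1 z.2) ∘ (fun θ : ℝ => (t, θ))) := rfl
    rw [h2]
    exact (cont_lap2 hu).comp ((cont_pt x₀).comp (continuous_const.prodMk continuous_id))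
  have h : (fun θ => Gfn u x₀ t θ)
      = fun θ => t * lap2 u (pt x₀ t θ) - Wder u x₀ t θ := by
    funext θ; exact key_identity u x₀ t θ
  rw [h, intervalIntegral.integral_sub ((show Continuous fun θ => t * lap2 u (pt x₀ t θ) from
      continuous_const.mul hLc).intervalIntegrable _ _)
    hWint, hW, intervalIntegral.integral_const_mul, sub_zero]

lemma J_repr (hu : ContDiff ℝ (⊤ : ℕ∞) u) (x₀ : ℝ × ℝ) {ρ : ℝ} (h0ρ : 0 ≤ ρ) :
    ρ * ∫ θ in (-π)..π, Dfn u x₀ ρ θ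
      = ∫ t in (0:ℝ)..ρ, t * ∫ θ in (-π)..π, lap2 u (pt x₀ t θ) := by
  rw [← intervalIntegral.integral_const_mul]
  rw [intervalIntegral.integral_congr
    (g := fun θ => ∫ t in (0:ℝ)..ρ, Gfn u x₀ t θ) (fun θ _ => radial_FTC hu x₀ θ ρ)]
  rw [← fubini_swap_cont (cont_G hu x₀) h0ρ (by linarith [Real.pi_pos])]
  exact intervalIntegral.integral_congr (fun t _ => angular_int hu x₀ t)

lemma J_bound (hu : ContDiff ℝ (⊤ : ℕ∞) u) (x₀ : ℝ × ℝ) {r ε ρ : ℝ} (hε : 0 ≤ ε)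
    (hlap : ∀ z ∈ Eball x₀ r, |lap2 u z| ≤ ε) (h0ρ : 0 < ρ) (hρr : ρ ≤ r) :
    |∫ θ in (-π)..π, Dfn u x₀ ρ θ| ≤ π * ε * ρ := by
  have hπ := Real.pi_pos
  have hL : ∀ t ∈ Set.Icc (0:ℝ) ρ, |∫ θ in (-π)..π, lap2 u (pt x₀ t θ)| ≤ ε * (2*π) := by
    intro t ht
    have := intervalIntegral.norm_integral_le_of_norm_le_const
      (f := fun θ => lap2 u (pt x₀ t θ)) (a := -π) (b := π) (C := ε)
      (fun θ _ => by
        rw [Real.norm_eq_abs]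
        exact hlap _ (pt_mem_Eball ht.1 (le_trans ht.2 hρr) θ))
    rw [Real.norm_eq_abs] at this
    calc |∫ θ in (-π)..π, lap2 u (pt x₀ t θ)| ≤ ε * |π - -π| := this
      _ = ε * (2*π) := by rw [abs_of_pos (by linarith)]; ring
  have hrepr := J_repr hu x₀ (le_of_lt h0ρ)
  have hb : |∫ t in (0:ℝ)..ρ, t * ∫ θ in (-π)..π, lap2 u (pt x₀ t θ)|
      ≤ π * ε * ρ^2 := by
    have hg : IntervalIntegrable (fun t => ε * (2*π) * t) volume 0 ρ := by
      apply Continuous.intervalIntegrable; fun_prop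
    have := intervalIntegral.norm_integral_le_abs_of_norm_le
      (f := fun t => t * ∫ θ in (-π)..π, lap2 u (pt x₀ t θ)) (μ := volume)
      (a := 0) (b := ρ) (g := fun t => ε * (2*π) * t) ?_ hg
    · rw [Real.norm_eq_abs] at this
      refine le_trans this ?_
      rw [intervalIntegral.integral_const_mul, integral_id]
      have h9 : ε * (2*π) * ((ρ^2 - 0^2)/2) = π * ε * ρ^2 := by ring
      rw [h9, abs_of_nonneg (by positivity)]
    · filter_upwards [ae_restrict_mem measurableSet_uIoc] with t ht
      rw [Set.uIoc_of_le (le_of_lt h0ρ)] at ht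
      rw [Real.norm_eq_abs, abs_mul, abs_of_nonneg (le_of_lt ht.1)]
      calc t * |∫ θ in (-π)..π, lap2 u (pt x₀ t θ)|
          ≤ t * (ε * (2*π)) := by
            exact mul_le_mul_of_nonneg_left
              (hL t ⟨le_of_lt ht.1, ht.2⟩) (le_of_lt ht.1)
        _ = ε * (2*π) * t := by ring
  rw [← hrepr] at hb
  rw [abs_mul, abs_of_pos h0ρ] at hb
  have h2 : ρ * |∫ θ in (-π)..π, Dfn u x₀ ρ θ| ≤ ρ * (π * ε * ρ) := by
    rw [show ρ * (π * ε * ρ) = π * ε * ρ^2 by ring]; exact hb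
  exact le_of_mul_le_mul_left h2 h0ρ

lemma Phi_bound (hu : ContDiff ℝ (⊤ : ℕ∞) u) (x₀ : ℝ × ℝ) {r ε ρ : ℝ} (hε : 0 ≤ ε)
    (hlap : ∀ z ∈ Eball x₀ r, |lap2 u z| ≤ ε) (h0ρ : 0 ≤ ρ) (hρr : ρ ≤ r) :
    |(∫ θ in (-π)..π, u (pt x₀ ρ θ)) - 2 * π * u x₀| ≤ π * ε * ρ^2 / 2 := by
  have hπ := Real.pi_pos
  have hDc : Continuous (fun z : ℝ × ℝ => Dfn u x₀ z.1 z.2) := cont_D hu x₀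
  have hFTCu : ∀ θ : ℝ, u (pt x₀ ρ θ) - u x₀ = ∫ t in (0:ℝ)..ρ, Dfn u x₀ t θ := by
    intro θ
    have hint : IntervalIntegrable (fun t => Dfn u x₀ t θ) volume 0 ρ := by
      have h2 : (fun t : ℝ => Dfn u x₀ t θ)
          = (fun z : ℝ × ℝ => Dfn u x₀ z.1 z.2) ∘ (fun t : ℝ => (t, θ)) := rfl
      apply Continuous.intervalIntegrable
      rw [h2]; exact hDc.comp (continuous_id.prodMk continuous_const)
    have hder : ∀ s ∈ Set.uIcc (0:ℝ) ρ, HasDerivAt (fun s => u (pt x₀ s θ))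
        (Dfn u x₀ s θ) s := fun s _ => hasDerivAt_radial hu x₀ θ s
    rw [integral_eq_sub_of_hasDerivAt hder hint]
    have hp0 : pt x₀ 0 θ = x₀ := by simp [pt]
    rw [hp0]
  have hcont : Continuous (fun θ : ℝ => u (pt x₀ ρ θ)) := by
    have h2 : (fun θ : ℝ => u (pt x₀ ρ θ))
        = u ∘ ((fun z : ℝ × ℝ => pt x₀ z.1 z.2) ∘ (fun θ : ℝ => (ρ, θ))) := rfl
    rw [h2]
    exact hu.continuous.comp ((cont_pt x₀).comp (continuous_const.prodMk continuous_id))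
  have key : (∫ θ in (-π)..π, u (pt x₀ ρ θ)) - 2 * π * u x₀
      = ∫ t in (0:ℝ)..ρ, ∫ θ in (-π)..π, Dfn u x₀ t θ := by
    have h1 : (∫ θ in (-π)..π, u (pt x₀ ρ θ)) - 2 * π * u x₀
        = ∫ θ in (-π)..π, (u (pt x₀ ρ θ) - u x₀) := by
      rw [intervalIntegral.integral_sub (hcont.intervalIntegrable _ _)
        (intervalIntegrable_const), intervalIntegral.integral_const]
      have : (π - -π) = 2 * π := by ring
      rw [this]
      simp [smul_eq_mul]
    rw [h1]
    rw [intervalIntegral.integral_congr (g := fun θ => ∫ t in (0:ℝ)..ρ, Dfn u x₀ t θ)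
      (fun θ _ => hFTCu θ)]
    rw [← fubini_swap_cont hDc h0ρ (by linarith)]
  rw [key]
  have hg : IntervalIntegrable (fun t => π * ε * t) volume 0 ρ := by
    apply Continuous.intervalIntegrable; fun_prop
  have := intervalIntegral.norm_integral_le_abs_of_norm_le
    (f := fun t => ∫ θ in (-π)..π, Dfn u x₀ t θ) (μ := volume)
    (a := 0) (b := ρ) (g := fun t => π * ε * t) ?_ hg
  · rw [Real.norm_eq_abs] at this
    refine le_trans this ?_
    rw [intervalIntegral.integral_const_mul, integral_id]
    have h9 : π * ε * ((ρ^2 - 0^2)/2) = π * ε * ρ^2 / 2 := by ring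
    rw [h9, abs_of_nonneg (by positivity)]
  · filter_upwards [ae_restrict_mem measurableSet_uIoc] with t ht
    rw [Set.uIoc_of_le h0ρ] at ht
    rw [Real.norm_eq_abs]
    exact J_bound hu x₀ hε hlap ht.1 (le_trans ht.2 hρr)

lemma isClosed_Eball (x₀ : ℝ × ℝ) (r : ℝ) : IsClosed (Eball x₀ r) := by
  have : Eball x₀ r = (fun z : ℝ × ℝ => (z.1 - x₀.1)^2 + (z.2 - x₀.2)^2) ⁻¹' (Set.Iic (r^2)) := rfl
  rw [this]
  exact IsClosed.preimage (by fun_prop) isClosed_Iic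

lemma Eball_subset_Icc (x₀ : ℝ × ℝ) (r : ℝ) :
    Eball x₀ r ⊆ Set.Icc (x₀.1 - |r|, x₀.2 - |r|) (x₀.1 + |r|, x₀.2 + |r|) := by
  intro z hz
  simp only [Eball, mem_setOf_eq] at hz
  have h1 : (z.1 - x₀.1)^2 ≤ r^2 := by nlinarith [sq_nonneg (z.2 - x₀.2)]
  have h2 : (z.2 - x₀.2)^2 ≤ r^2 := by nlinarith [sq_nonneg (z.1 - x₀.1)]
  have hr2 : r^2 = |r|^2 := (sq_abs r).symm
  rw [hr2] at h1 h2
  simp only [Set.mem_Icc, Prod.le_def]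
  refine ⟨⟨?_, ?_⟩, ?_, ?_⟩ <;>
    nlinarith [sq_nonneg (z.1 - x₀.1 + |r|), sq_nonneg (z.1 - x₀.1 - |r|),
      sq_nonneg (z.2 - x₀.2 + |r|), sq_nonneg (z.2 - x₀.2 - |r|), abs_nonneg r]

lemma isCompact_Eball (x₀ : ℝ × ℝ) (r : ℝ) : IsCompact (Eball x₀ r) :=
  IsCompact.of_isClosed_subset isCompact_Icc (isClosed_Eball x₀ r) (Eball_subset_Icc x₀ r)

lemma integrableOn_Eball {f : ℝ × ℝ → ℝ} (hf : Continuous f) (x₀ : ℝ × ℝ) (r : ℝ) :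
    IntegrableOn f (Eball x₀ r) volume :=
  hf.continuousOn.integrableOn_compact (isCompact_Eball x₀ r)

lemma polar_repr {f : ℝ × ℝ → ℝ} (hf : Continuous f) (x₀ : ℝ × ℝ) {r : ℝ} (hr : 0 < r) :
    ∫ z in Eball x₀ r, f z
      = ∫ ρ in (0:ℝ)..r, ρ * ∫ θ in (-π)..π, f (pt x₀ ρ θ) := by
  have hπ := Real.pi_pos
  have hmeas : MeasurableSet (Eball x₀ r) := (isClosed_Eball x₀ r).measurableSet
  set F : ℝ × ℝ → ℝ := (Eball x₀ r).indicator f with hF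
  have step1 : ∫ z in Eball x₀ r, f z = ∫ z, F z := (MeasureTheory.integral_indicator hmeas).symm
  have step2 : ∫ z, F z = ∫ w, F (x₀ + w) := (MeasureTheory.integral_add_left_eq_self F x₀).symm
  have step3 : ∫ w, F (x₀ + w)
      = ∫ q in polarCoord.target, q.1 • F (x₀ + polarCoord.symm q) :=
    (integral_comp_polarCoord_symm (fun w => F (x₀ + w))).symm
  set g : ℝ × ℝ → ℝ := fun q => q.1 * f (pt x₀ q.1 q.2) with hg
  have hgc : Continuous g := by
    have := cont_pt x₀
    unfold g
    fun_prop
  have step4 : ∫ q in polarCoord.target, q.1 • F (x₀ + polarCoord.symm q)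
      = ∫ q in polarCoord.target, (Set.Iic r ×ˢ (Set.univ : Set ℝ)).indicator g q := by
    apply setIntegral_congr_fun (polarCoord.open_target.measurableSet)
    intro q hq
    dsimp only
    rw [polarCoord_target] at hq
    have hq1 : 0 < q.1 := hq.1
    have hmem : (x₀ + polarCoord.symm q ∈ Eball x₀ r) ↔ q.1 ≤ r := by
      simp only [Eball, mem_setOf_eq, polarCoord_symm_apply, Prod.fst_add, Prod.snd_add]
      constructor
      · intro h
        nlinarith [Real.sin_sq_add_cos_sq q.2, sq_nonneg (q.1 - r), sq_nonneg (q.1 + r)]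
      · intro h
        nlinarith [Real.sin_sq_add_cos_sq q.2, sq_nonneg q.1]
    by_cases hcase : q.1 ≤ r
    · have h1 : x₀ + polarCoord.symm q ∈ Eball x₀ r := hmem.mpr hcase
      have h2 : q ∈ Set.Iic r ×ˢ (Set.univ : Set ℝ) := ⟨hcase, trivial⟩
      simp only [hF]
      rw [Set.indicator_of_mem h1, Set.indicator_of_mem h2]
      have hpt : x₀ + (polarCoord.symm q) = pt x₀ q.1 q.2 := by
        simp [pt, Prod.ext_iff, polarCoord_symm_apply]
      rw [hpt, smul_eq_mul]
    · have h1 : x₀ + polarCoord.symm q ∉ Eball x₀ r := fun h => hcase (hmem.mp h)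
      have h2 : q ∉ Set.Iic r ×ˢ (Set.univ : Set ℝ) := fun h => hcase h.1
      simp only [hF]
      rw [Set.indicator_of_notMem h1, Set.indicator_of_notMem h2, smul_zero]
  have step5 : ∫ q in polarCoord.target, (Set.Iic r ×ˢ (Set.univ : Set ℝ)).indicator g q
      = ∫ q in (Set.Ioc 0 r ×ˢ Set.Ioo (-π) π : Set (ℝ × ℝ)), g q := by
    have hset : polarCoord.target ∩ (Set.Iic r ×ˢ (Set.univ : Set ℝ))
        = Set.Ioc 0 r ×ˢ Set.Ioo (-π) π := by
      rw [polarCoord_target]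
      ext q
      simp only [Set.mem_inter_iff, Set.mem_prod, Set.mem_Ioi, Set.mem_Ioo, Set.mem_Iic,
        Set.mem_univ, Set.mem_Ioc, and_true]
      tauto
    rw [setIntegral_indicator (measurableSet_Iic.prod MeasurableSet.univ), hset]
  have hint : IntegrableOn g (Set.Ioc 0 r ×ˢ Set.Ioo (-π) π) volume := by
    have hc : IsCompact (Set.Icc (0:ℝ) r ×ˢ Set.Icc (-π) π) := isCompact_Icc.prod isCompact_Icc
    exact (hgc.continuousOn.integrableOn_compact hc).mono_set
      (Set.prod_mono Set.Ioc_subset_Icc_self Set.Ioo_subset_Icc_self)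
  have step6 : ∫ q in (Set.Ioc 0 r ×ˢ Set.Ioo (-π) π : Set (ℝ × ℝ)), g q
      = ∫ ρ in Set.Ioc (0:ℝ) r, ∫ θ in Set.Ioo (-π) π, g (ρ, θ) := by
    rw [Measure.volume_eq_prod] at hint ⊢
    exact setIntegral_prod g hint
  have step7 : (∫ ρ in Set.Ioc (0:ℝ) r, ∫ θ in Set.Ioo (-π) π, g (ρ, θ))
      = ∫ ρ in (0:ℝ)..r, ρ * ∫ θ in (-π)..π, f (pt x₀ ρ θ) := by
    rw [intervalIntegral.integral_of_le (le_of_lt hr)]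
    apply setIntegral_congr_fun measurableSet_Ioc
    intro ρ _
    dsimp only
    rw [intervalIntegral.integral_of_le (by linarith : -π ≤ π), integral_Ioc_eq_integral_Ioo,
      ← MeasureTheory.integral_const_mul]
  rw [step1, step2, step3, step4, step5, step6, step7]

lemma vol_Eball (x₀ : ℝ × ℝ) {r : ℝ} (hr : 0 < r) :
    ∫ _z in Eball x₀ r, (1:ℝ) = π * r^2 := by
  rw [polar_repr continuous_const x₀ hr]
  have h1 : ∀ ρ : ℝ, (∫ _θ in (-π)..π, (1:ℝ)) = 2 * π := by
    intro ρ; rw [intervalIntegral.integral_const]; simp [smul_eq_mul]; ring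
  rw [intervalIntegral.integral_congr (g := fun ρ => 2 * π * ρ)
    (fun ρ _ => by rw [h1 ρ]; ring)]
  rw [intervalIntegral.integral_const_mul, integral_id]
  ring

lemma mvp {u : ℝ × ℝ → ℝ} (hu : ContDiff ℝ (⊤ : ℕ∞) u) (x₀ : ℝ × ℝ) {r ε : ℝ}
    (hε : 0 ≤ ε) (hr : 0 < r) (hlap : ∀ z ∈ Eball x₀ r, |lap2 u z| ≤ ε) :
    |(∫ z in Eball x₀ r, u z) - π * r^2 * u x₀| ≤ π * ε * r^4 / 8 := by
  have hπ := Real.pi_pos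
  rw [polar_repr hu.continuous x₀ hr]
  have hPhiC : Continuous (fun ρ : ℝ => ∫ θ in (-π)..π, u (pt x₀ ρ θ)) := by
    apply intervalIntegral.continuous_parametric_intervalIntegral_of_continuous'
    have : Function.uncurry (fun ρ θ : ℝ => u (pt x₀ ρ θ))
        = u ∘ (fun z : ℝ × ℝ => pt x₀ z.1 z.2) := rfl
    rw [this]
    exact hu.continuous.comp (cont_pt x₀)
  have hconst : π * r^2 * u x₀ = ∫ ρ in (0:ℝ)..r, ρ * (2 * π * u x₀) := by
    rw [intervalIntegral.integral_mul_const, integral_id]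
    ring
  rw [hconst]
  have hsub : (∫ ρ in (0:ℝ)..r, ρ * ∫ θ in (-π)..π, u (pt x₀ ρ θ))
      - (∫ ρ in (0:ℝ)..r, ρ * (2 * π * u x₀))
      = ∫ ρ in (0:ℝ)..r, ρ * ((∫ θ in (-π)..π, u (pt x₀ ρ θ)) - 2 * π * u x₀) := by
    have h1 : IntervalIntegrable (fun ρ : ℝ => ρ * ∫ θ in (-π)..π, u (pt x₀ ρ θ))
        volume 0 r := (continuous_id.mul hPhiC).intervalIntegrable _ _
    have h2 : IntervalIntegrable (fun ρ : ℝ => ρ * (2 * π * u x₀)) volume 0 r :=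
      (continuous_id.mul continuous_const).intervalIntegrable _ _
    rw [← intervalIntegral.integral_sub h1 h2]
    congr 1
    funext ρ
    ring
  rw [hsub]
  have hg : IntervalIntegrable (fun ρ => π * ε / 2 * ρ^3) volume 0 r := by
    apply Continuous.intervalIntegrable; fun_prop
  have hb := intervalIntegral.norm_integral_le_abs_of_norm_le
    (f := fun ρ => ρ * ((∫ θ in (-π)..π, u (pt x₀ ρ θ)) - 2 * π * u x₀)) (μ := volume)
    (a := 0) (b := r) (g := fun ρ => π * ε / 2 * ρ^3) ?_ hg
  · rw [Real.norm_eq_abs] at hb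
    refine le_trans hb ?_
    rw [intervalIntegral.integral_const_mul, integral_pow]
    have h9 : (π * ε / 2) * ((r ^ (3 + 1) - 0 ^ (3 + 1)) / (((3:ℕ) : ℝ) + 1))
        = π * ε * r ^ 4 / 8 := by push_cast; ring
    rw [h9, abs_of_nonneg (by positivity)]
  · filter_upwards [ae_restrict_mem measurableSet_uIoc] with ρ hρ
    rw [Set.uIoc_of_le (le_of_lt hr)] at hρ
    rw [Real.norm_eq_abs, abs_mul, abs_of_nonneg (le_of_lt hρ.1)]
    have hφ := Phi_bound hu x₀ hε hlap (le_of_lt hρ.1) hρ.2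
    calc ρ * |(∫ θ in (-π)..π, u (pt x₀ ρ θ)) - 2 * π * u x₀|
        ≤ ρ * (π * ε * ρ^2 / 2) := mul_le_mul_of_nonneg_left hφ (le_of_lt hρ.1)
      _ = π * ε / 2 * ρ^3 := by ring

lemma mvp_sub {u : ℝ × ℝ → ℝ} (hu : ContDiff ℝ (⊤ : ℕ∞) u) (x₀ : ℝ × ℝ) {r ε L : ℝ}
    (hε : 0 ≤ ε) (hr : 0 < r) (hlap : ∀ z ∈ Eball x₀ r, |lap2 u z| ≤ ε) :
    |(∫ z in Eball x₀ r, (u z - L)) - π * r^2 * (u x₀ - L)| ≤ π * ε * r^4 / 8 := by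
  have hIu : IntegrableOn u (Eball x₀ r) volume := integrableOn_Eball hu.continuous x₀ r
  have hIL : IntegrableOn (fun _ => L) (Eball x₀ r) volume :=
    integrableOn_const (isCompact_Eball x₀ r).measure_lt_top.ne
  have h1 : ∫ z in Eball x₀ r, (u z - L) = (∫ z in Eball x₀ r, u z) - π * r^2 * L := by
    rw [MeasureTheory.integral_sub hIu hIL]
    congr 1
    have h2 : ∫ _z in Eball x₀ r, L = L * ∫ _z in Eball x₀ r, (1:ℝ) := by
      rw [← MeasureTheory.integral_const_mul]
      simp
    rw [h2, vol_Eball x₀ hr]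
    ring
  rw [h1]
  have h3 : (∫ z in Eball x₀ r, u z) - π * r^2 * L - π * r^2 * (u x₀ - L)
      = (∫ z in Eball x₀ r, u z) - π * r^2 * u x₀ := by ring
  rw [h3]
  exact mvp hu x₀ hε hr hlap

lemma mvp_lower {u : ℝ × ℝ → ℝ} (hu : ContDiff ℝ (⊤ : ℕ∞) u) (x₀ : ℝ × ℝ) {r ε L : ℝ}
    (hε : 0 ≤ ε) (hr : 0 < r) (hlap : ∀ z ∈ Eball x₀ r, |lap2 u z| ≤ ε) :
    π * r^2 * (u x₀ - L) ≤ (∫ z in Eball x₀ r, (u z - L)) + π * ε * r^4 / 8 := by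
  have := abs_le.mp (mvp_sub hu x₀ hε hr hlap (L := L))
  linarith [this.1]

lemma mvp_upper {u : ℝ × ℝ → ℝ} (hu : ContDiff ℝ (⊤ : ℕ∞) u) (x₀ : ℝ × ℝ) {r ε L : ℝ}
    (hε : 0 ≤ ε) (hr : 0 < r) (hlap : ∀ z ∈ Eball x₀ r, |lap2 u z| ≤ ε) :
    (∫ z in Eball x₀ r, (u z - L)) ≤ π * r^2 * (u x₀ - L) + π * ε * r^4 / 8 := by
  have := abs_le.mp (mvp_sub hu x₀ hε hr hlap (L := L))
  linarith [this.2]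

end core

lemma Eball_subset {x y : ℝ × ℝ} {ρ R : ℝ} (hρ : 0 ≤ ρ) (hρR : ρ ≤ R)
    (hd : (y.1 - x.1)^2 + (y.2 - x.2)^2 ≤ (R - ρ)^2) :
    Eball y ρ ⊆ Eball x R := by
  intro z hz
  simp only [Eball, mem_setOf_eq] at hz ⊢
  set a1 := z.1 - y.1; set a2 := z.2 - y.2; set b1 := y.1 - x.1; set b2 := y.2 - x.2
  have hz1 : z.1 - x.1 = a1 + b1 := by simp [a1, b1]
  have hz2 : z.2 - x.2 = a2 + b2 := by simp [a2, b2]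
  rw [hz1, hz2]
  have hRρ : 0 ≤ R - ρ := by linarith
  nlinarith [sq_nonneg (a1*b2 - a2*b1), sq_nonneg (a1*b1 + a2*b2 - ρ*(R-ρ)),
    mul_nonneg hρ hRρ, sq_nonneg (a1 + b1), sq_nonneg (a2 + b2), sq_nonneg (ρ - R)]

/-- the iteration sequence for the chaining constants -/
noncomputable def gseq (K E : ℝ) : ℕ → ℝ
  | 0 => K
  | (n+1) => 4 * gseq K E n + E

lemma periodic_shift {v : ℝ × ℝ → ℝ}
    (hper : ∀ p : ℝ × ℝ, v (p.1 + 2 * Real.pi, p.2) = v p) :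
    ∀ (n : ℤ) (t s : ℝ), v (t + 2 * Real.pi * n, s) = v (t, s) := by
  have hper' : ∀ (x s : ℝ), v (x + 2 * Real.pi, s) = v (x, s) := fun x s => hper (x, s)
  intro n
  induction n using Int.induction_on with
  | zero => intro t s; norm_num
  | succ k ih =>
    intro t s
    have h1 : t + 2 * Real.pi * (((k : ℤ) + 1 : ℤ) : ℝ)
        = (t + 2 * Real.pi * ((k : ℤ) : ℝ)) + 2 * Real.pi := by push_cast; ring
    rw [h1, hper' (t + 2 * Real.pi * ((k : ℤ) : ℝ)) s]
    exact_mod_cast ih t s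
  | pred k ih =>
    intro t s
    have h1 : (t + 2 * Real.pi * ((-(k:ℤ) - 1 : ℤ) : ℝ)) + 2 * Real.pi
        = t + 2 * Real.pi * ((-(k:ℤ) : ℤ) : ℝ) := by push_cast; ring
    rw [show v (t, s) = v (t + 2 * Real.pi * ((-(k:ℤ) : ℤ) : ℝ), s) from (ih t s).symm, ← h1]
    exact (hper' _ s).symm

set_option maxHeartbeats 2000000 in
/-- Harnack-type consequence for almost-harmonic conformal
factors on a cylinder segment S¹ × [a, b] (modeled by 2π-periodic-in-θ
functions on ℝ × ℝ with coordinates (θ, s)): if v > 0 is smooth with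
|Δ(log v)| ≤ ε, v ≥ c > 0 on the segment, and every unit-length subcylinder
contains a point where v ≤ C₁, then v ≤ C₂ on S¹ × [a+1, b−1], where C₂
depends only on c, C₁, ε (not on a, b, v). -/
theorem harnack_upper_bound (c C₁ ε : ℝ) (hc : 0 < c) (hε : 0 ≤ ε)
    (hC₁ : 0 < C₁) :
    ∃ C₂ : ℝ, ∀ (a b : ℝ) (v : ℝ × ℝ → ℝ),
      ContDiff ℝ (⊤ : ℕ∞) v →
      (∀ p : ℝ × ℝ, v (p.1 + 2 * Real.pi, p.2) = v p) →
      (∀ p : ℝ × ℝ, 0 < v p) →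
      (∀ p : ℝ × ℝ, p.2 ∈ Set.Icc a b → c ≤ v p) →
      (∀ p : ℝ × ℝ, p.2 ∈ Set.Icc a b →
        |lap2 (fun q => Real.log (v q)) p| ≤ ε) →
      (∀ s₀ : ℝ, a ≤ s₀ → s₀ + 1 ≤ b →
        ∃ p : ℝ × ℝ, p.2 ∈ Set.Icc s₀ (s₀ + 1) ∧ v p ≤ C₁) →
      ∀ p : ℝ × ℝ, p.2 ∈ Set.Icc (a + 1) (b - 1) → v p ≤ C₂ := by
  have hπ := Real.pi_pos
  have hπ4 : π ≤ 4 := Real.pi_le_four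
  set L : ℝ := Real.log c with hLdef
  set K : ℝ := π/4 * (Real.log C₁ - Real.log c) + ε with hKdef
  set G : ℝ := gseq K ε 15 with hGdef
  refine ⟨Real.exp (L + ((16/π) * G + ε)), ?_⟩
  intro a b v hv hper hpos hlow hlap hinf p hp
  obtain ⟨hpa, hpb⟩ := hp
  set u : ℝ × ℝ → ℝ := fun q => Real.log (v q) with hu_def
  have hu : ContDiff ℝ (⊤ : ℕ∞) u := by
    rw [contDiff_iff_contDiffAt]
    intro q
    exact (Real.contDiffAt_log.mpr (ne_of_gt (hpos q))).comp q hv.contDiffAt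
  have hustrip : ∀ w : ℝ × ℝ, w.2 ∈ Set.Icc a b → L ≤ u w := fun w hw =>
    (Real.log_le_log_iff hc (hpos w)).mpr (hlow w hw)
  -- the low point, shifted into angular window
  obtain ⟨q, hq2, hqv⟩ := hinf (p.2 - 1/2) (by linarith) (by linarith)
  have hq2a : p.2 - 1/2 ≤ q.2 := hq2.1
  have hq2b : q.2 ≤ p.2 + 1/2 := by have := hq2.2; linarith
  have h2π : (0:ℝ) < 2*π := by linarith
  obtain ⟨q', hvq', hq'angle, hq'2⟩ :
      ∃ q' : ℝ × ℝ, v q' = v q ∧ |q'.1 - p.1| ≤ π ∧ q'.2 = q.2 := by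
    refine ⟨(q.1 + 2*π*((-⌊(q.1 - p.1 + π) / (2*π)⌋ : ℤ):ℝ), q.2),
      periodic_shift hper _ q.1 q.2, ?_, rfl⟩
    have hfl : ((⌊(q.1 - p.1 + π) / (2*π)⌋ : ℤ) : ℝ) * (2*π) ≤ q.1 - p.1 + π :=
      (le_div_iff₀ h2π).mp (Int.floor_le _)
    have hfl2 : q.1 - p.1 + π < (((⌊(q.1 - p.1 + π) / (2*π)⌋ : ℤ) : ℝ) + 1) * (2*π) :=
      (div_lt_iff₀ h2π).mp (Int.lt_floor_add_one _)
    have hcast : (((-⌊(q.1 - p.1 + π) / (2*π)⌋ : ℤ)):ℝ)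
        = -((⌊(q.1 - p.1 + π) / (2*π)⌋ : ℤ) : ℝ) := by push_cast; ring
    rw [show ((q.1 + 2*π*((-⌊(q.1 - p.1 + π) / (2*π)⌋ : ℤ):ℝ), q.2) : ℝ × ℝ).1
      = q.1 + 2*π*((-⌊(q.1 - p.1 + π) / (2*π)⌋ : ℤ):ℝ) from rfl, abs_le, hcast]
    constructor <;> nlinarith
  have huq' : u q' ≤ Real.log C₁ := by
    have : v q' ≤ C₁ := by rw [hvq']; exact hqv
    exact (Real.log_le_log_iff (hpos q') hC₁).mpr this
  have hq'close : |q'.2 - p.2| ≤ 1/2 := by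
    rw [hq'2, abs_le]; constructor <;> linarith
  -- the chain of points
  set z : ℕ → ℝ × ℝ := fun i =>
    (q'.1 + (i:ℝ)/16*(p.1 - q'.1), q'.2 + (i:ℝ)/16*(p.2 - q'.2)) with hzdef
  have hz0 : z 0 = q' := by
    rw [hzdef]; simp
  have hz16 : z 16 = p := by
    rw [hzdef]
    have e1 : q'.1 + ((16:ℕ):ℝ)/16*(p.1 - q'.1) = p.1 := by push_cast; ring
    have e2 : q'.2 + ((16:ℕ):ℝ)/16*(p.2 - q'.2) = p.2 := by push_cast; ring
    simp only [e1, e2]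
  have hz2 : ∀ i : ℕ, i ≤ 16 → |(z i).2 - p.2| ≤ 1/2 := by
    intro i hi
    have hi0 : (0:ℝ) ≤ (i:ℝ)/16 := by positivity
    have hi1 : (i:ℝ)/16 ≤ 1 := by
      rw [div_le_one (by norm_num)]
      exact_mod_cast le_trans (Nat.cast_le.mpr hi) (by norm_num)
    have he : (z i).2 - p.2 = (1 - (i:ℝ)/16) * (q'.2 - p.2) := by
      rw [hzdef]; dsimp only; ring
    rw [he, abs_mul]
    calc |1 - (i:ℝ)/16| * |q'.2 - p.2| ≤ 1 * (1/2) := by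
          apply mul_le_mul _ hq'close (abs_nonneg _) (by norm_num)
          rw [abs_le]; constructor <;> linarith
      _ = 1/2 := by norm_num
  have hstep : ∀ i : ℕ,
      ((z (i+1)).1 - (z i).1)^2 + ((z (i+1)).2 - (z i).2)^2 ≤ ((1:ℝ)/2 - 1/4)^2 := by
    intro i
    have he1 : (z (i+1)).1 - (z i).1 = (1/16) * (p.1 - q'.1) := by
      rw [hzdef]; dsimp only; push_cast; ring
    have he2 : (z (i+1)).2 - (z i).2 = (1/16) * (p.2 - q'.2) := by
      rw [hzdef]; dsimp only; push_cast; ring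
    rw [he1, he2]
    have ha := abs_le.mp hq'angle
    have hb := abs_le.mp hq'close
    have hπ315 : π < 3.15 := Real.pi_lt_d2
    have hA : (p.1 - q'.1)^2 ≤ π^2 := by nlinarith [ha.1, ha.2]
    have hB : (p.2 - q'.2)^2 ≤ (1/2:ℝ)^2 := by nlinarith [hb.1, hb.2]
    have hπ2 : π^2 ≤ 15.75 := by nlinarith [Real.pi_pos]
    nlinarith [hA, hB, hπ2]
  -- laplacian and lower bounds on the chain balls
  have hlapAt : ∀ y : ℝ × ℝ, |y.2 - p.2| ≤ 1/2 →
      ∀ w ∈ Eball y (1/2), |lap2 u w| ≤ ε := by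
    intro y hy w hw
    simp only [Eball, Set.mem_setOf_eq] at hw
    have h1 : |w.2 - y.2| ≤ 1/2 := by
      rw [abs_le]; constructor <;> nlinarith [sq_nonneg (w.1 - y.1)]
    have h2 := abs_le.mp h1
    have h3 := abs_le.mp hy
    exact hlap w ⟨by linarith, by linarith⟩
  have hLAt : ∀ y : ℝ × ℝ, |y.2 - p.2| ≤ 1/2 →
      ∀ w ∈ Eball y (1/2), L ≤ u w := by
    intro y hy w hw
    simp only [Eball, Set.mem_setOf_eq] at hw
    have h1 : |w.2 - y.2| ≤ 1/2 := by
      rw [abs_le]; constructor <;> nlinarith [sq_nonneg (w.1 - y.1)]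
    have h2 := abs_le.mp h1
    have h3 := abs_le.mp hy
    exact hustrip w ⟨by linarith, by linarith⟩
  set Q : ℕ → ℝ := fun i => ∫ w in Eball (z i) (1/2), (u w - L) with hQdef
  have hπε : π * ε ≤ 4 * ε := mul_le_mul_of_nonneg_right hπ4 hε
  -- base case
  have hQ0 : Q 0 ≤ K := by
    have hup := mvp_upper hu (z 0) (r := 1/2) (L := L) hε (by norm_num)
      (by rw [hz0]; exact hlapAt q' hq'close)
    have e1 : π * (1/2:ℝ)^2 * (u (z 0) - L) = π/4 * (u (z 0) - L) := by ring
    have e2 : π * ε * (1/2:ℝ)^4 / 8 = π * ε / 128 := by ring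
    rw [e1, e2] at hup
    have h3 : u (z 0) - L ≤ Real.log C₁ - L := by rw [hz0]; linarith [huq']
    have h4 : π/4 * (u (z 0) - L) ≤ π/4 * (Real.log C₁ - L) :=
      mul_le_mul_of_nonneg_left h3 (by positivity)
    have : Q 0 = ∫ w in Eball (z 0) (1/2), (u w - L) := rfl
    rw [this, hKdef, hLdef]
    rw [hLdef] at hup h4
    linarith
  -- inductive step core : pointwise bound from previous ball
  have hcore : ∀ i : ℕ, i < 16 →
      u (z (i+1)) - L ≤ (16/π) * Q i + ε/128 := by
    intro i hi
    have hyi := hz2 i (le_of_lt hi)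
    have hyi1 := hz2 (i+1) (by omega)
    have hsubset : Eball (z (i+1)) (1/4) ⊆ Eball (z i) (1/2) :=
      Eball_subset (by norm_num) (by norm_num) (hstep i)
    have hIi : IntegrableOn (fun w => u w - L) (Eball (z i) (1/2)) volume :=
      integrableOn_Eball (hu.continuous.sub continuous_const) _ _
    have hnn : 0 ≤ᵐ[volume.restrict (Eball (z i) (1/2))] (fun w => u w - L) := by
      have hae : ∀ᵐ w ∂(volume.restrict (Eball (z i) (1/2))), 0 ≤ u w - L := by
        rw [ae_restrict_iff' (isClosed_Eball _ _).measurableSet]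
        exact ae_of_all _ (fun w hw => sub_nonneg.mpr (hLAt (z i) hyi w hw))
      exact hae
    have hmono : (∫ w in Eball (z (i+1)) (1/4), (u w - L)) ≤ Q i :=
      setIntegral_mono_set hIi hnn (HasSubset.Subset.eventuallyLE hsubset)
    have hsmall : Eball (z (i+1)) (1/4) ⊆ Eball (z (i+1)) (1/2) :=
      Eball_subset (by norm_num) (by norm_num) (by norm_num)
    have hlow1 := mvp_lower hu (z (i+1)) (r := 1/4) (L := L) hε (by norm_num)
      (fun w hw => hlapAt (z (i+1)) hyi1 w (hsmall hw))
    have e1 : π * (1/4:ℝ)^2 * (u (z (i+1)) - L) = π/16 * (u (z (i+1)) - L) := by ring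
    rw [e1] at hlow1
    have h5 : π/16 * (u (z (i+1)) - L) ≤ Q i + π * ε * (1/4:ℝ)^4/8 := by linarith
    calc u (z (i+1)) - L = (16/π) * (π/16 * (u (z (i+1)) - L)) := by field_simp
      _ ≤ (16/π) * (Q i + π * ε * (1/4:ℝ)^4/8) :=
          mul_le_mul_of_nonneg_left h5 (by positivity)
      _ = (16/π) * Q i + (16/π) * (π * ε * (1/4:ℝ)^4/8) := by ring
      _ = (16/π) * Q i + ε/128 := by
          congr 1
          field_simp
          ring
  have hQstep : ∀ i : ℕ, i < 16 → Q (i+1) ≤ 4 * Q i + ε := by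
    intro i hi
    have hyi1 := hz2 (i+1) (by omega)
    have h4 := hcore i hi
    have hup1 := mvp_upper hu (z (i+1)) (r := 1/2) (L := L) hε (by norm_num)
      (fun w hw => hlapAt (z (i+1)) hyi1 w hw)
    have e1 : π * (1/2:ℝ)^2 * (u (z (i+1)) - L) = π/4 * (u (z (i+1)) - L) := by ring
    have e2 : π * ε * (1/2:ℝ)^4 / 8 = π * ε / 128 := by ring
    rw [e1, e2] at hup1
    have h7 : π/4 * (u (z (i+1)) - L) ≤ π/4 * ((16/π) * Q i + ε/128) :=
      mul_le_mul_of_nonneg_left h4 (by positivity)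
    have h8 : π/4 * ((16/π) * Q i + ε/128) = 4 * Q i + π * ε/512 := by
      field_simp
      ring
    have : Q (i+1) = ∫ w in Eball (z (i+1)) (1/2), (u w - L) := rfl
    rw [this]
    linarith
  have hQbound : ∀ i : ℕ, i ≤ 16 → Q i ≤ gseq K ε i := by
    intro i
    induction i with
    | zero => intro _; exact hQ0
    | succ k ih =>
      intro hk
      have h1 := hQstep k (by omega)
      have h2 := ih (by omega)
      have h3 : gseq K ε (k+1) = 4 * gseq K ε k + ε := rfl
      linarith
  -- final bound at p = z 16
  have hfin : u p - L ≤ (16/π) * G + ε := by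
    have h1 := hcore 15 (by norm_num)
    rw [show (15 + 1 : ℕ) = 16 from rfl, hz16] at h1
    have h2 : Q 15 ≤ G := hQbound 15 (by norm_num)
    have h3 : (16/π) * Q 15 ≤ (16/π) * G := mul_le_mul_of_nonneg_left h2 (by positivity)
    linarith
  have hvexp : v p = Real.exp (u p) := (Real.exp_log (hpos p)).symm
  rw [hvexp]
  exact Real.exp_le_exp.mpr (by linarith)
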